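/- Let G = (V,E;w) be a finite simple undirected graph with positive vertex weights and no isolated vertices, and let α* be its minimal α-ratio. If for some ε > 0 a nonempty set B̂ ⊆ V minimizes cap(B,ε) over all nonempty B ⊆ V and B̂ is a bottleneck (i.e. α(B̂) = α*), then B̂ is the maximal bottleneck of G. -/

import Mathlib

/-
On a bottleneck `B` we have `w(Γ(B)) = α*·w(B)`, so the first two terms of `cap(B,ε)` add up
to `α*·w(V)` and `cap(B,ε) = α*·w(V) + (n − |B|)·ε`. Among bottlenecks the capacity therefore
strictly decreases as `B` grows, and a bottleneck minimizing it admits no strictly larger one.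
-/

open Finset

/-- The total weight of a finite set of vertices. -/
def wsum {V : Type*} (w : V → ℝ) (S : Finset V) : ℝ := ∑ v ∈ S, w v

/-- The neighborhood `Γ(S)` of a set `S` of vertices: all vertices adjacent to at least one
vertex of `S`. -/
def nbhd {V : Type*} [Fintype V] [DecidableEq V] (G : SimpleGraph V) [DecidableRel G.Adj]
    (S : Finset V) : Finset V :=
  univ.filter fun v => ∃ u ∈ S, G.Adj u v

/-- The α-ratio `α(S) = w(Γ(S)) / w(S)` of a set `S`. -/
noncomputable def alphaR {V : Type*} [Fintype V] [DecidableEq V] (G : SimpleGraph V)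
    [DecidableRel G.Adj] (w : V → ℝ) (S : Finset V) : ℝ :=
  wsum w (nbhd G S) / wsum w S

/-- `B` is a maximal bottleneck: it is nonempty, its α-ratio is minimal among all nonempty
subsets (i.e. `α(B) = α*`), and every strictly larger subset has strictly larger α-ratio. -/
def IsMaxBottleneck {V : Type*} [Fintype V] [DecidableEq V] (G : SimpleGraph V)
    [DecidableRel G.Adj] (w : V → ℝ) (B : Finset V) : Prop :=
  B.Nonempty ∧ (∀ S : Finset V, S.Nonempty → alphaR G w B ≤ alphaR G w S) ∧
    ∀ B' : Finset V, B ⊂ B' → alphaR G w B < alphaR G w B'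

/-- The capacity `cap(B,ε) = α*·(w(V) − w(B)) + w(Γ(B)) + (n − |B|)·ε` of the cut with
source side `{s} ∪ B ∪ {ũ : u ∈ Γ(B)}` in the network `N(G,α*,ε)`, where `n = |V|`. -/
noncomputable def capEps {V : Type*} [Fintype V] [DecidableEq V] (G : SimpleGraph V)
    [DecidableRel G.Adj] (w : V → ℝ) (astar eps : ℝ) (B : Finset V) : ℝ :=
  astar * (wsum w univ - wsum w B) + wsum w (nbhd G B) +
    ((Fintype.card V : ℝ) - B.card) * eps

theorem wsum_pos {V : Type*} {w : V → ℝ} (hw : ∀ v, 0 < w v) {S : Finset V}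
    (hS : S.Nonempty) : 0 < wsum w S :=
  Finset.sum_pos (fun v _ => hw v) hS

section

variable {V : Type*} [Fintype V] [DecidableEq V] (G : SimpleGraph V) [DecidableRel G.Adj]
  (w : V → ℝ)

theorem wsum_nbhd_eq_of_alphaR_eq {S : Finset V} {a : ℝ} (hS : wsum w S ≠ 0)
    (h : alphaR G w S = a) : wsum w (nbhd G S) = a * wsum w S := by
  rw [alphaR, div_eq_iff hS] at h
  exact h

theorem capEps_eq_of_alphaR_eq {astar eps : ℝ} {B : Finset V} (hB : wsum w B ≠ 0)
    (h : alphaR G w B = astar) :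
    capEps G w astar eps B = astar * wsum w univ + ((Fintype.card V : ℝ) - B.card) * eps := by
  rw [capEps, wsum_nbhd_eq_of_alphaR_eq G w hB h]
  ring

theorem capEps_lt_of_ssubset_of_alphaR_eq (hw : ∀ v, 0 < w v) {astar eps : ℝ} (heps : 0 < eps)
    {B B' : Finset V} (hBB' : B ⊂ B') (hB : B.Nonempty)
    (h : alphaR G w B = astar) (h' : alphaR G w B' = astar) :
    capEps G w astar eps B' < capEps G w astar eps B := by
  have hcard : (B.card : ℝ) < B'.card := by exact_mod_cast Finset.card_lt_card hBB'
  rw [capEps_eq_of_alphaR_eq G w (wsum_pos hw hB).ne' h,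
    capEps_eq_of_alphaR_eq G w (wsum_pos hw (hB.mono hBB'.subset)).ne' h']
  gcongr

end

theorem min_capEps_bottleneck_is_maximal_general {V : Type*} [Fintype V] [DecidableEq V]
    (G : SimpleGraph V) [DecidableRel G.Adj] (w : V → ℝ)
    (hw : ∀ v, 0 < w v)
    (astar : ℝ)
    (hstar : IsLeast {r : ℝ | ∃ S : Finset V, S.Nonempty ∧ r = alphaR G w S} astar)
    (eps : ℝ) (heps : 0 < eps)
    (Bhat : Finset V) (hne : Bhat.Nonempty)
    (hmin : ∀ B : Finset V, B.Nonempty →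
      capEps G w astar eps Bhat ≤ capEps G w astar eps B)
    (hbot : alphaR G w Bhat = astar) :
    IsMaxBottleneck G w Bhat := by
  refine ⟨hne, fun S hS => hbot ▸ hstar.2 ⟨S, hS, rfl⟩, fun B' hB' => ?_⟩
  have hB'ne : B'.Nonempty := hne.mono hB'.subset
  refine hbot ▸ (hstar.2 ⟨B', hB'ne, rfl⟩).lt_of_ne fun h => ?_
  exact (capEps_lt_of_ssubset_of_alphaR_eq G w hw heps hB' hne hbot h.symm).not_ge
    (hmin B' hB'ne)

/-- if for some `ε > 0` a nonempty `B̂ ⊆ V` minimizes `cap(B,ε)` over all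
nonempty `B ⊆ V` and `B̂` is a bottleneck (`α(B̂) = α*`), then `B̂` is the maximal
bottleneck of `G`. -/
theorem min_capEps_bottleneck_is_maximal {V : Type*} [Fintype V] [DecidableEq V]
    (G : SimpleGraph V) [DecidableRel G.Adj] (w : V → ℝ)
    (hw : ∀ v, 0 < w v) (hiso : ∀ v : V, ∃ u, G.Adj v u)
    (astar : ℝ)
    (hstar : IsLeast {r : ℝ | ∃ S : Finset V, S.Nonempty ∧ r = alphaR G w S} astar)
    (eps : ℝ) (heps : 0 < eps)
    (Bhat : Finset V) (hne : Bhat.Nonempty)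
    (hmin : ∀ B : Finset V, B.Nonempty →
      capEps G w astar eps Bhat ≤ capEps G w astar eps B)
    (hbot : alphaR G w Bhat = astar) :
    IsMaxBottleneck G w Bhat :=
  min_capEps_bottleneck_is_maximal_general G w hw astar hstar eps heps Bhat hne hmin hbot
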